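/- arXiv:2208.01117 — 2 statements merged into one kernel-verified Lean document; each statement's English description precedes it below -/
import Mathlib

section
/- Let V be a category with small coproducts. Then V is extensive — meaning that for every small family (x_i)_{i∈I} of objects the coproduct functor ∏_{i∈I} (V/x_i) → V/(∐_{i∈I} x_i), sending a family of objects (f_i : y_i → x_i)_{i∈I} to ∐_{i∈I} f_i : ∐_{i∈I} y_i → ∐_{i∈I} x_i and a family of morphisms over the x_i to the coproduct morphism, is an equivalence of categories — if and only if V has pullbacks along coproduct coprojections and both of the following hold: (e1) for every small family of morphisms (f_i : y_i → x_i)_{i∈I} and every i, the square with top f_i, vertical coprojections y_i → ∐_j y_j and x_i → ∐_j x_j, and bottom ∐_j f_j, is a pullback; (e2) coproducts are universal. -/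
open CategoryTheory CategoryTheory.Limits

universe v u

variable (V : Type u) [Category.{v} V] [HasCoproducts.{v} V]

/-- The coproduct functor `∏_{i} (V/x i) ⥤ V/(∐ x)`, sending a family
`(f i : y i ⟶ x i)` to `∐ f : ∐ y ⟶ ∐ x`. -/
noncomputable def coprodFunctor {I : Type v} (x : I → V) : (∀ i, Over (x i)) ⥤ Over (∐ x) where
  obj f := Over.mk (Limits.Sigma.map fun i => (f i).hom)
  map {f g} η := Over.homMk (Limits.Sigma.map fun i => (η i).left) (by
    dsimp
    ext i
    simp [Over.w (η i)])
  map_id f := by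
    ext
    dsimp
    ext i
    simp
  map_comp {f g h} η θ := by
    ext
    dsimp
    ext i
    simp

/-- Condition (e1): for every small family of morphisms `f i : y i ⟶ x i`, each
square with top `f i`, vertical coprojections and bottom `∐ f` is a pullback. -/
def CondE1 : Prop :=
  ∀ ⦃I : Type v⦄ (y x : I → V) (f : ∀ i, y i ⟶ x i) (i : I),
    IsPullback (f i) (Sigma.ι y i) (Sigma.ι x i) (Limits.Sigma.map f)

/-- Coproducts are universal (e2): the coproduct of the pullbacks of the
coprojections along any morphism `f : Y ⟶ ∐ x` maps isomorphically onto `Y`. -/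
def UniversalCoproducts : Prop :=
  ∀ ⦃I : Type v⦄ (x : I → V) (Y : V) (f : Y ⟶ ∐ x)
    (y : I → V) (p : ∀ i, y i ⟶ Y) (q : ∀ i, y i ⟶ x i),
    (∀ i, IsPullback (q i) (p i) (Sigma.ι x i) f) → IsIso (Sigma.desc p)

section Aux


variable {V}

lemma hasInitial_of_hasCoproducts : HasInitial V :=
  hasInitialChangeUniverse (C := V)
    (h := inferInstanceAs (HasColimitsOfShape (Discrete PEmpty.{v+1}) V))

lemma over_hom_congr {X : V} {U U' : Over X} (e : U = U') :
    U.hom = eqToHom (e ▸ rfl : U.left = U'.left) ≫ U'.hom := by subst e; simp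

variable [HasInitial V] {I : Type v} [DecidableEq I] (x : I → V) (i : I) {W : V} (a : W ⟶ x i)

/-- The family which is `W` (over `x i`) at index `i` and initial elsewhere. -/
noncomputable def branchFam : ∀ j, Over (x j) := fun j =>
  if h : j = i then Over.mk (a ≫ eqToHom (congrArg x h.symm)) else Over.mk (initial.to (x j))

lemma branchFam_self : branchFam x i a i = Over.mk a := by
  simp [branchFam]

lemma branchFam_ne {j : I} (h : j ≠ i) : branchFam x i a j = Over.mk (initial.to (x j)) := by
  simp [branchFam, h]

lemma branchFam_left_self : (branchFam x i a i).left = W := by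
  rw [branchFam_self]; rfl

lemma branchFam_left_ne {j : I} (h : j ≠ i) : (branchFam x i a j).left = ⊥_ V := by
  rw [branchFam_ne x i a h]; rfl

lemma branchFam_hom_self :
    (branchFam x i a i).hom = eqToHom (branchFam_left_self x i a) ≫ a :=
  over_hom_congr (branchFam_self x i a)

lemma branchFam_hom_ne {j : I} (h : j ≠ i) :
    (branchFam x i a j).hom = eqToHom (branchFam_left_ne x i a h) ≫ initial.to (x j) :=
  over_hom_congr (branchFam_ne x i a h)

/-- Descent morphism out of the coproduct of a branch family. -/
noncomputable def branchDesc {Y : V} (b : W ⟶ Y) :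
    (∐ fun j => (branchFam x i a j).left) ⟶ Y :=
  Sigma.desc fun j =>
    if h : j = i then eqToHom (by rw [h]; exact branchFam_left_self x i a) ≫ b
    else eqToHom (branchFam_left_ne x i a h) ≫ initial.to Y

lemma ι_branchDesc_self {Y : V} (b : W ⟶ Y) :
    Sigma.ι (fun j => (branchFam x i a j).left) i ≫ branchDesc x i a b
      = eqToHom (branchFam_left_self x i a) ≫ b := by
  simp [branchDesc]

lemma ι_branchDesc_ne {Y : V} (b : W ⟶ Y) {j : I} (h : j ≠ i) :
    Sigma.ι (fun j => (branchFam x i a j).left) j ≫ branchDesc x i a b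
      = eqToHom (branchFam_left_ne x i a h) ≫ initial.to Y := by
  simp [branchDesc, h]

/-- The canonical family of morphisms from a branch family. -/
noncomputable def branchHom (o : ∀ j, Over (x j))
    (m : W ⟶ (o i).left) (hm : m ≫ (o i).hom = a) :
    ∀ j, branchFam x i a j ⟶ o j := fun j =>
  if h : j = i then
    h.symm ▸ (eqToHom (branchFam_self x i a) ≫ Over.homMk m hm)
  else
    eqToHom (branchFam_ne x i a h) ≫
      Over.homMk (initial.to (o j).left) (initial.hom_ext _ _)

lemma branchHom_left_self (o : ∀ j, Over (x j))
    (m : W ⟶ (o i).left) (hm : m ≫ (o i).hom = a) :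
    (branchHom x i a o m hm i).left = eqToHom (branchFam_left_self x i a) ≫ m := by
  have : branchHom x i a o m hm i = eqToHom (branchFam_self x i a) ≫ Over.homMk m hm := by
    unfold branchHom
    rw [dif_pos rfl]
  rw [this]
  simp

lemma branchHom_left_ne (o : ∀ j, Over (x j))
    (m : W ⟶ (o i).left) (hm : m ≫ (o i).hom = a) {j : I} (h : j ≠ i) :
    (branchHom x i a o m hm j).left
      = eqToHom (branchFam_left_ne x i a h) ≫ initial.to (o j).left := by
  have : branchHom x i a o m hm j
      = eqToHom (branchFam_ne x i a h) ≫ Over.homMk (initial.to (o j).left) (initial.hom_ext _ _) := by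
    unfold branchHom
    rw [dif_neg h]
  rw [this]
  simp

end Aux

section KeyLemma

variable {V}

lemma key_isPullback {I : Type v} (x : I → V) [(coprodFunctor V x).IsEquivalence]
    (o : ∀ i, Over (x i)) {Y : V} (f : Y ⟶ ∐ x)
    (e : (∐ fun i => (o i).left) ⟶ Y) [IsIso e]
    (he : e ≫ f = Limits.Sigma.map fun i => (o i).hom) (i : I) :
    IsPullback ((o i).hom) (Sigma.ι (fun j => (o j).left) i ≫ e) (Sigma.ι x i) f := by
  haveI : HasInitial V := hasInitial_of_hasCoproducts
  haveI : DecidableEq I := Classical.decEq I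
  haveI : (coprodFunctor V x).Faithful := Functor.IsEquivalence.faithful
  haveI : (coprodFunctor V x).Full := Functor.IsEquivalence.full
  have comm : (o i).hom ≫ Sigma.ι x i = (Sigma.ι (fun j => (o j).left) i ≫ e) ≫ f := by
    rw [Category.assoc, he]; simp
  -- the comparison iso in `Over (∐ x)`
  let φ : (coprodFunctor V x).obj o ≅ Over.mk f :=
    Over.isoMk (asIso e : (∐ fun i => (o i).left) ≅ Y) (by simpa [coprodFunctor] using he)
  -- data extracted from an arbitrary cone
  have hψ : ∀ s : PullbackCone (Sigma.ι x i) f,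
      branchDesc x i s.fst s.snd ≫ f
        = Limits.Sigma.map fun j => (branchFam x i s.fst j).hom := by
    intro s
    apply Sigma.hom_ext
    intro j
    by_cases h : j = i
    · subst h
      rw [← Category.assoc, ι_branchDesc_self, Sigma.ι_map]
      rw [branchFam_hom_self, Category.assoc, Category.assoc, ← s.condition]
    · rw [← Category.assoc, ι_branchDesc_ne x i s.fst s.snd h, Sigma.ι_map]
      rw [branchFam_hom_ne x i s.fst h]
      simp [initial.to_comp]
  let γ : ∀ s : PullbackCone (Sigma.ι x i) f,
      (coprodFunctor V x).obj (branchFam x i s.fst) ⟶ (coprodFunctor V x).obj o :=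
    fun s => Over.homMk (branchDesc x i s.fst s.snd) (by simpa [coprodFunctor] using hψ s) ≫ φ.inv
  have hγleft : ∀ s, (γ s).left = branchDesc x i s.fst s.snd ≫ inv e := fun s => rfl
  -- the chosen preimages
  let η : ∀ s : PullbackCone (Sigma.ι x i) f, ∀ j, branchFam x i s.fst j ⟶ o j :=
    fun s => ((coprodFunctor V x).map_surjective (γ s)).choose
  have hη : ∀ s, (coprodFunctor V x).map (η s) = γ s :=
    fun s => ((coprodFunctor V x).map_surjective (γ s)).choose_spec
  have hηleft : ∀ s, (Limits.Sigma.map fun j => ((η s) j).left) ≫ e = branchDesc x i s.fst s.snd := by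
    intro s
    have := congrArg CommaMorphism.left (hη s)
    dsimp [coprodFunctor] at this
    rw [show (Limits.Sigma.map fun j => ((η s) j).left) = (γ s).left from this, hγleft]
    simp
  -- key component equation
  have hcomp : ∀ s : PullbackCone (Sigma.ι x i) f,
      ((η s) i).left ≫ (Sigma.ι (fun j => (o j).left) i ≫ e)
        = eqToHom (branchFam_left_self x i s.fst) ≫ s.snd := by
    intro s
    have h1 : Sigma.ι (fun j => (branchFam x i s.fst j).left) i
          ≫ (Limits.Sigma.map fun j => ((η s) j).left) ≫ e
        = ((η s) i).left ≫ Sigma.ι (fun j => (o j).left) i ≫ e := by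
      simp
    rw [← h1, hηleft s, ι_branchDesc_self]
  refine IsPullback.of_isLimit' ⟨comm⟩ (PullbackCone.IsLimit.mk _
    (fun s => eqToHom (branchFam_left_self x i s.fst).symm ≫ ((η s) i).left) ?_ ?_ ?_)
  · -- fac_left
    intro s
    have hw := Over.w ((η s) i)
    rw [Category.assoc, hw, branchFam_hom_self]
    rw [eqToHom_trans_assoc, eqToHom_refl, Category.id_comp]
  · -- fac_right
    intro s
    rw [Category.assoc, hcomp s]
    rw [eqToHom_trans_assoc, eqToHom_refl, Category.id_comp]
  · -- uniqueness
    intro s m hm1 hm2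
    have hη' : (coprodFunctor V x).map (branchHom x i s.fst o m hm1) = γ s := by
      ext
      show Limits.Sigma.map (fun j => (branchHom x i s.fst o m hm1 j).left) = (γ s).left
      rw [hγleft, ← cancel_mono e]
      simp only [Category.assoc, IsIso.inv_hom_id, Category.comp_id]
      apply Sigma.hom_ext
      intro j
      rw [Sigma.ι_map_assoc]
      beta_reduce
      by_cases h : j = i
      · subst h
        rw [branchHom_left_self, ι_branchDesc_self, Category.assoc, hm2]
      · rw [branchHom_left_ne x i s.fst o m hm1 h, ι_branchDesc_ne x i s.fst s.snd h,
          Category.assoc]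
        exact (cancel_epi _).mpr (initial.hom_ext _ _)
    have heq : branchHom x i s.fst o m hm1 = η s :=
      (coprodFunctor V x).map_injective (by rw [hη', hη])
    have hi : (branchHom x i s.fst o m hm1 i).left = ((η s) i).left :=
      congrArg (fun t => CommaMorphism.left (t i)) heq
    rw [branchHom_left_self] at hi
    show m = eqToHom (branchFam_left_self x i s.fst).symm ≫ ((η s) i).left
    rw [← hi]
    rw [eqToHom_trans_assoc, eqToHom_refl, Category.id_comp]

end KeyLemma

section Main

variable {V}

/-- The canonical decomposition squares of any `f : Y ⟶ ∐ x` are pullbacks,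
assuming the coproduct functor is an equivalence. -/
lemma decomposition (hF : ∀ {I : Type v} (x : I → V), (coprodFunctor V x).IsEquivalence)
    {I : Type v} (x : I → V) {Y : V} (f : Y ⟶ ∐ x) :
    ∃ (o : ∀ i, Over (x i)) (e : (∐ fun i => (o i).left) ⟶ Y) (_ : IsIso e),
      e ≫ f = Limits.Sigma.map (fun i => (o i).hom) ∧
      ∀ i, IsPullback ((o i).hom) (Sigma.ι (fun j => (o j).left) i ≫ e) (Sigma.ι x i) f := by
  haveI := hF x
  haveI : (coprodFunctor V x).EssSurj := Functor.IsEquivalence.essSurj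
  let o := (coprodFunctor V x).objPreimage (Over.mk f)
  let φ : (coprodFunctor V x).obj o ≅ Over.mk f :=
    (coprodFunctor V x).objObjPreimageIso (Over.mk f)
  let e : (∐ fun i => (o i).left) ⟶ Y := φ.hom.left
  haveI : IsIso e := inferInstanceAs (IsIso ((Over.forget (∐ x)).map φ.hom))
  have he : e ≫ f = Limits.Sigma.map (fun i => (o i).hom) := Over.w φ.hom
  exact ⟨o, e, inferInstance, he, fun i => key_isPullback x o f e he i⟩

end Main

/-- A category with small coproducts is extensive (every
coproduct functor `∏_i (V/x i) ⥤ V/(∐ x)` is an equivalence) if and only if it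
has pullbacks along coproduct coprojections and conditions (e1) and (e2)
(universality of coproducts) hold. -/
theorem extensive_iff_e1_and_universal :
    (∀ {I : Type v} (x : I → V), (coprodFunctor V x).IsEquivalence) ↔
      ((∀ ⦃I : Type v⦄ (x : I → V) (i : I) ⦃Y : V⦄ (f : Y ⟶ ∐ x),
          HasPullback (Sigma.ι x i) f) ∧
        CondE1 V ∧ UniversalCoproducts V) := by
  constructor
  · intro hF
    refine ⟨?_, ?_, ?_⟩
    · -- pullbacks along coprojections
      intro I x i Y f
      obtain ⟨o, e, _, he, hpb⟩ := decomposition hF x f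
      exact (hpb i).hasPullback
    · -- condition (e1)
      intro I y x f i
      haveI := hF x
      have h := key_isPullback x (fun j => Over.mk (f j)) (Limits.Sigma.map f) (𝟙 _)
        (by simp) i
      simpa using h
    · -- universality (e2)
      intro I x Y f y p q hpb
      obtain ⟨o, e, _, he, hk⟩ := decomposition hF x f
      let r : ∀ i, y i ≅ (o i).left := fun i => (hpb i).isoIsPullback _ _ (hk i)
      have hr : IsIso (Limits.Sigma.map fun i => (r i).hom) :=
        ⟨Limits.Sigma.map fun i => (r i).inv, by
          rw [Sigma.map_comp_map]
          simp, by
          rw [Sigma.map_comp_map]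
          simp⟩
      have hd : Sigma.desc p = (Limits.Sigma.map fun i => (r i).hom) ≫ e := by
        apply Sigma.hom_ext
        intro i
        rw [colimit.ι_desc, Sigma.ι_map_assoc]
        beta_reduce
        rw [(hpb i).isoIsPullback_hom_snd]
        rfl
      rw [hd]
      exact @IsIso.comp_isIso _ _ _ _ _ _ _ hr _
  · rintro ⟨hP, h1, h2⟩ I x
    constructor
    · -- faithful
      refine ⟨fun {ff gg} η θ h => ?_⟩
      have hl := congrArg CommaMorphism.left h
      have hl' : Limits.Sigma.map (fun j => (η j).left)
          = Limits.Sigma.map (fun j => (θ j).left) := hl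
      funext i
      ext
      apply (h1 (fun j => (gg j).left) x (fun j => (gg j).hom) i).hom_ext
      · rw [Over.w (η i), Over.w (θ i)]
      · have := congrArg (fun t => Sigma.ι (fun j => (ff j).left) i ≫ t) hl'
        simpa using this
    · -- full
      refine ⟨fun {ff gg} γ => ?_⟩
      have hw : γ.left ≫ Limits.Sigma.map (fun j => (gg j).hom)
          = Limits.Sigma.map (fun j => (ff j).hom) := Over.w γ
      have hcomm : ∀ i, (ff i).hom ≫ Sigma.ι x i
          = (Sigma.ι (fun j => (ff j).left) i ≫ γ.left)
              ≫ Limits.Sigma.map (fun j => (gg j).hom) := by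
        intro i
        exact ((Sigma.ι_map (fun j => (ff j).hom) i).symm.trans
          (congrArg (fun t => Sigma.ι (fun j => (ff j).left) i ≫ t) hw).symm).trans
          (Category.assoc _ _ _).symm
      have hfst := fun i => (h1 (fun j => (gg j).left) x (fun j => (gg j).hom) i).lift_fst
        ((ff i).hom) (Sigma.ι (fun j => (ff j).left) i ≫ γ.left) (hcomm i)
      have hsnd := fun i => (h1 (fun j => (gg j).left) x (fun j => (gg j).hom) i).lift_snd
        ((ff i).hom) (Sigma.ι (fun j => (ff j).left) i ≫ γ.left) (hcomm i)
      let η : ∀ i, ff i ⟶ gg i := fun i =>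
        Over.homMk ((h1 (fun j => (gg j).left) x (fun j => (gg j).hom) i).lift
          ((ff i).hom) (Sigma.ι (fun j => (ff j).left) i ≫ γ.left) (hcomm i))
          (by simpa using hfst i)
      refine ⟨η, ?_⟩
      ext
      have hm : ((coprodFunctor V x).map η).left
          = Limits.Sigma.map (fun j => (η j).left) := rfl
      rw [hm]
      apply Sigma.hom_ext
      intro i
      rw [Sigma.ι_map]
      beta_reduce
      have hηl : (η i).left = (h1 (fun j => (gg j).left) x (fun j => (gg j).hom) i).lift
          ((ff i).hom) (Sigma.ι (fun j => (ff j).left) i ≫ γ.left) (hcomm i) := rfl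
      rw [hηl, hsnd i]
    · -- essentially surjective
      constructor
      intro Z
      haveI : ∀ i, HasPullback (Sigma.ι x i) Z.hom := fun i => hP x i Z.hom
      have pbs : ∀ i, IsPullback (pullback.fst (Sigma.ι x i) Z.hom)
          (pullback.snd (Sigma.ι x i) Z.hom) (Sigma.ι x i) Z.hom :=
        fun i => IsPullback.of_hasPullback _ _
      let d : (∐ fun i => pullback (Sigma.ι x i) Z.hom) ⟶ Z.left :=
        Sigma.desc fun i => pullback.snd (Sigma.ι x i) Z.hom
      haveI : IsIso d := h2 x Z.left Z.hom _ _ _ pbs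
      refine ⟨fun i => Over.mk (pullback.fst (Sigma.ι x i) Z.hom), ⟨?_⟩⟩
      refine Over.isoMk (asIso d : (∐ fun i => pullback (Sigma.ι x i) Z.hom) ≅ Z.left) ?_
      have hobj : ((coprodFunctor V x).obj
            (fun i => Over.mk (pullback.fst (Sigma.ι x i) Z.hom))).hom
          = Limits.Sigma.map
              (fun i => (Over.mk (pullback.fst (Sigma.ι x i) Z.hom)).hom) := rfl
      show (asIso d).hom ≫ Z.hom = _
      rw [asIso_hom, hobj]
      show Sigma.desc (fun i => pullback.snd (Sigma.ι x i) Z.hom) ≫ Z.hom = _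
      apply Sigma.hom_ext
      intro i
      rw [colimit.ι_desc_assoc, Sigma.ι_map, Cofan.mk_ι_app,
        ← pullback.condition]
      rfl
end

section
/- Let V be a category with small coproducts. Then V is extensive — meaning that for every small family (x_i)_{i∈I} of objects the coproduct functor ∏_{i∈I} (V/x_i) → V/(∐_{i∈I} x_i), sending a family of objects (f_i : y_i → x_i)_{i∈I} to ∐_{i∈I} f_i and a family of morphisms over the x_i to the coproduct morphism, is an equivalence of categories — if and only if V has pullbacks along coproduct coprojections and both of the following hold: (e2) coproducts are universal; (e3) coproducts are disjoint. -/
open CategoryTheory CategoryTheory.Limits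

universe v u

variable (V : Type u) [Category.{v} V] [HasCoproducts.{v} V]

/-- Coproducts are disjoint (e3): the pullback of two distinct coprojections is
the initial object. -/
def DisjointCoproducts [HasInitial V] : Prop :=
  ∀ ⦃I : Type v⦄ (x : I → V) (i j : I), i ≠ j →
    IsPullback (initial.to (x i)) (initial.to (x j)) (Sigma.ι x i) (Sigma.ι x j)

variable {V}

/-- M1: if `T` maps to the initial object, then maps out of `T` are unique. -/
lemma strict_initial [HasInitial V] (hu : UniversalCoproducts V)
    {T : V} (t : T ⟶ ⊥_ V) {Z : V} (u v : T ⟶ Z) : u = v := by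
  have h := hu (fun i : PEmpty.{v+1} => i.elim) T (t ≫ initial.to _)
    (fun i => i.elim) (fun i => i.elim) (fun i => i.elim) (fun i => i.elim)
  set d := Sigma.desc (fun i : PEmpty.{v+1} => (i.elim : _ ⟶ T)) with hd
  haveI : IsIso d := h
  have key : d ≫ u = d ≫ v := by apply Sigma.hom_ext; rintro ⟨⟨⟩⟩
  calc u = inv d ≫ d ≫ u := by rw [IsIso.inv_hom_id_assoc]
    _ = inv d ≫ d ≫ v := by rw [key]
    _ = v := by rw [IsIso.inv_hom_id_assoc]


/-- M2: coprojections are monic. -/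
lemma mono_sigma_ι [HasInitial V]
    (hp : ∀ ⦃I : Type v⦄ (x : I → V) (i : I) ⦃Y : V⦄ (f : Y ⟶ ∐ x), HasPullback (Sigma.ι x i) f)
    (hu : UniversalCoproducts V) (hd : DisjointCoproducts V)
    {I : Type v} (x : I → V) (i : I) : Mono (Sigma.ι x i) := by
  constructor
  intro T u v huv
  classical
  set k := v ≫ Sigma.ι x i with hk
  haveI : ∀ j, HasPullback (Sigma.ι x j) k := fun j => hp x j k
  set w : I → V := fun j => pullback (Sigma.ι x j) k with hw
  have hpb : ∀ j, IsPullback (pullback.fst (Sigma.ι x j) k) (pullback.snd (Sigma.ι x j) k)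
      (Sigma.ι x j) k := fun j => IsPullback.of_hasPullback _ _
  haveI : IsIso (Sigma.desc fun j => pullback.snd (Sigma.ι x j) k) :=
    hu x T k _ _ _ hpb
  set d := Sigma.desc fun j => pullback.snd (Sigma.ι x j) k with hdd
  have hu' : u ≫ Sigma.ι x i = 𝟙 T ≫ k := by simpa [hk] using huv
  have hv' : v ≫ Sigma.ι x i = 𝟙 T ≫ k := by simp [hk]
  set su := pullback.lift u (𝟙 T) hu' with hsu
  set sv := pullback.lift v (𝟙 T) hv' with hsv
  have h1 : su ≫ Sigma.ι w i ≫ d = 𝟙 T := by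
    rw [hsu, hdd]; erw [Sigma.ι_desc]; exact pullback.lift_snd _ _ _
  have h2 : sv ≫ Sigma.ι w i ≫ d = 𝟙 T := by
    rw [hsv, hdd]; erw [Sigma.ι_desc]; exact pullback.lift_snd _ _ _
  have heq : su ≫ Sigma.ι w i = sv ≫ Sigma.ι w i := by
    have h3 : ((su ≫ Sigma.ι w i) ≫ d) ≫ inv d = ((sv ≫ Sigma.ι w i) ≫ d) ≫ inv d := by
      rw [Category.assoc su, h1, Category.assoc sv, h2]
    simpa using h3
  -- construct retraction from ∐ w to x i
  set c : ∀ j, w j ⟶ x i := fun j =>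
    if h : j = i then eqToHom (by rw [h]) ≫ pullback.fst (Sigma.ι x i) k
    else ((hd x i j (fun h' => h h'.symm)).lift (pullback.snd (Sigma.ι x j) k ≫ v)
      (pullback.fst (Sigma.ι x j) k)
      (by rw [Category.assoc, ← hk]; exact (hpb j).w.symm)) ≫ initial.to (x i) with hc
  have hci : Sigma.ι w i ≫ Sigma.desc c = pullback.fst (Sigma.ι x i) k := by
    simp [hc]
  calc u = su ≫ pullback.fst (Sigma.ι x i) k := by rw [hsu]; exact (pullback.lift_fst _ _ _).symm
    _ = su ≫ Sigma.ι w i ≫ Sigma.desc c := by rw [hci]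
    _ = sv ≫ Sigma.ι w i ≫ Sigma.desc c := by rw [← Category.assoc, heq, Category.assoc]
    _ = sv ≫ pullback.fst (Sigma.ι x i) k := by rw [hci]
    _ = v := by rw [hsv]; exact pullback.lift_fst _ _ _


/-- M3: the square `(f i, ι_i ; ι_i, Sigma.map f)` is a pullback. -/
lemma key_pullback [HasInitial V]
    (hp : ∀ ⦃I : Type v⦄ (x : I → V) (i : I) ⦃Y : V⦄ (f : Y ⟶ ∐ x), HasPullback (Sigma.ι x i) f)
    (hu : UniversalCoproducts V) (hd : DisjointCoproducts V)
    {I : Type v} (x y : I → V) (f : ∀ i, y i ⟶ x i) (i : I) :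
    IsPullback (f i) (Sigma.ι y i) (Sigma.ι x i) (Limits.Sigma.map f) := by
  classical
  have hmap : ∀ j, Sigma.ι y j ≫ Limits.Sigma.map f = f j ≫ Sigma.ι x j := fun j => by simp
  have comm : f i ≫ Sigma.ι x i = Sigma.ι y i ≫ Limits.Sigma.map f := (hmap i).symm
  have H : ∀ (T : V) (a : T ⟶ x i) (b : T ⟶ ∐ y), a ≫ Sigma.ι x i = b ≫ Limits.Sigma.map f →
      ∃ l : T ⟶ y i, l ≫ f i = a ∧ l ≫ Sigma.ι y i = b := by
    intro T a b hab
    haveI : ∀ j, HasPullback (Sigma.ι y j) b := fun j => hp y j b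
    set w : I → V := fun j => pullback (Sigma.ι y j) b with hw
    have hpb : ∀ j, IsPullback (pullback.fst (Sigma.ι y j) b) (pullback.snd (Sigma.ι y j) b)
        (Sigma.ι y j) b := fun j => IsPullback.of_hasPullback _ _
    haveI hE : IsIso (Sigma.desc fun j => pullback.snd (Sigma.ι y j) b) := hu y T b _ _ _ hpb
    set e := Sigma.desc fun j => pullback.snd (Sigma.ι y j) b with he
    have tℓ : ∀ j, j ≠ i → (w j ⟶ ⊥_ V) := by
      intro j hj
      refine (hd x i j (fun h' => hj h'.symm)).lift
        (pullback.snd (Sigma.ι y j) b ≫ a) (pullback.fst (Sigma.ι y j) b ≫ f j) ?_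
      rw [Category.assoc, hab]
      simp only [Category.assoc]
      rw [← hmap j, ← Category.assoc, ← Category.assoc, (hpb j).w]
    set d : ∀ j, w j ⟶ y i := fun j =>
      if h : j = i then eqToHom (by rw [h]) ≫ pullback.fst (Sigma.ι y i) b
      else tℓ j h ≫ initial.to (y i) with hdd
    refine ⟨inv e ≫ Sigma.desc d, ?_, ?_⟩
    · rw [Category.assoc, IsIso.inv_comp_eq]
      ext j
      simp only [he, colimit.ι_desc_assoc, Cofan.mk_ι_app, colimit.ι_desc]
      by_cases h : j = i
      · subst h
        simp only [hdd, dif_pos rfl, eqToHom_refl, Category.id_comp]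
        haveI := mono_sigma_ι hp hu hd x j
        rw [← cancel_mono (Sigma.ι x j)]
        simp only [Category.assoc]
        rw [hab, ← hmap j, ← Category.assoc, ← Category.assoc, (hpb j).w]
      · exact strict_initial hu (tℓ j h) _ _
    · rw [Category.assoc, IsIso.inv_comp_eq]
      ext j
      simp only [he, colimit.ι_desc_assoc, Cofan.mk_ι_app, colimit.ι_desc]
      by_cases h : j = i
      · subst h
        simp only [hdd, dif_pos rfl, eqToHom_refl, Category.id_comp]
        exact (hpb j).w
      · exact strict_initial hu (tℓ j h) _ _
  refine IsPullback.of_isLimit (PullbackCone.IsLimit.mk comm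
    (fun s => (H s.pt s.fst s.snd s.condition).choose)
    (fun s => (H s.pt s.fst s.snd s.condition).choose_spec.1)
    (fun s => (H s.pt s.fst s.snd s.condition).choose_spec.2)
    (fun s m hm1 hm2 => ?_))
  haveI := mono_sigma_ι hp hu hd y i
  rw [← cancel_mono (Sigma.ι y i), hm2, (H s.pt s.fst s.snd s.condition).choose_spec.2]

variable (V)

lemma backward [HasInitial V]
    (hp : ∀ ⦃I : Type v⦄ (x : I → V) (i : I) ⦃Y : V⦄ (f : Y ⟶ ∐ x), HasPullback (Sigma.ι x i) f)
    (hu : UniversalCoproducts V) (hd : DisjointCoproducts V)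
    {I : Type v} (x : I → V) : (coprodFunctor (V := V) x).IsEquivalence := by
  constructor
  · constructor
    intro a b η θ h
    have h' : Limits.Sigma.map (fun i => (η i).left) = Limits.Sigma.map (fun i => (θ i).left) :=
      congrArg CommaMorphism.left h
    funext i
    ext
    haveI := mono_sigma_ι hp hu hd (fun i => (b i).left) i
    rw [← cancel_mono (Sigma.ι (fun i => (b i).left) i)]
    have := congrArg (fun z => Sigma.ι (fun i => (a i).left) i ≫ z) h'
    simpa using this
  · constructor
    intro a b h
    have kp := fun i => key_pullback hp hu hd x (fun i => (b i).left) (fun i => (b i).hom) i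
    have hw : h.left ≫ Limits.Sigma.map (fun i => (b i).hom)
        = Limits.Sigma.map (fun i => (a i).hom) := Over.w h
    have comm : ∀ i, (a i).hom ≫ Sigma.ι x i
        = (Sigma.ι (fun j => (a j).left) i ≫ h.left) ≫ Limits.Sigma.map (fun i => (b i).hom) := by
      intro i
      erw [Category.assoc, hw]
      simp
    refine ⟨fun i => Over.homMk
      ((kp i).lift (a i).hom (Sigma.ι (fun j => (a j).left) i ≫ h.left) (comm i))
      ((kp i).lift_fst _ _ _), ?_⟩
    ext
    dsimp [coprodFunctor]
    ext i
    simpa using (kp i).lift_snd (a i).hom (Sigma.ι (fun j => (a j).left) i ≫ h.left) (comm i)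
  · constructor
    intro g
    haveI : ∀ i, HasPullback (Sigma.ι x i) g.hom := fun i => hp x i g.hom
    have H : ∀ i, IsPullback (pullback.fst (Sigma.ι x i) g.hom) (pullback.snd (Sigma.ι x i) g.hom)
        (Sigma.ι x i) g.hom := fun i => IsPullback.of_hasPullback _ _
    have hiso : IsIso (Sigma.desc fun i => pullback.snd (Sigma.ι x i) g.hom) :=
      hu x g.left g.hom _ _ _ H
    refine ⟨fun i => Over.mk (pullback.fst (Sigma.ι x i) g.hom),
      ⟨Over.isoMk (@asIso _ _ _ _ (Sigma.desc fun i => pullback.snd (Sigma.ι x i) g.hom) hiso)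
        ?_⟩⟩
    dsimp [coprodFunctor]
    ext i
    simp [pullback.condition]

variable {V}

lemma eq_from_bot [HasInitial V] {W Z : V} (h : W = (⊥_ V)) (u v : W ⟶ Z) : u = v := by
  subst h; exact initial.hom_ext u v

section Conc

variable [HasInitial V]

/-- Left components of the family concentrated at `i`. -/
noncomputable def concL {I : Type v} (i : I) (T : V) : I → V := fun j =>
  @ite _ (i = j) (Classical.propDecidable _) T (⊥_ V)

lemma concL_self {I : Type v} (i : I) (T : V) : concL i T i = T := by simp [concL]

lemma concL_ne {I : Type v} {i j : I} (T : V) (h : i ≠ j) : concL i T j = ⊥_ V := by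
  simp [concL, h]

/-- The family concentrated at `i`, with value `a : T ⟶ x i`. -/
noncomputable def concF {I : Type v} (x : I → V) (i : I) {T : V} (a : T ⟶ x i) :
    ∀ j, Over (x j) := fun j =>
  Over.mk (show concL i T j ⟶ x j from
    letI := Classical.propDecidable (i = j)
    if h : i = j then eqToHom (by rw [h, concL_self]) ≫ a ≫ eqToHom (congrArg x h)
    else eqToHom (concL_ne T h) ≫ initial.to (x j))

lemma concF_left {I : Type v} (x : I → V) (i : I) {T : V} (a : T ⟶ x i) (j : I) :
    (concF x i a j).left = concL i T j := rfl

/-- The canonical map from the coproduct of the concentrated family to `T`. -/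
noncomputable def concW {I : Type v} (x : I → V) (i : I) {T : V} (a : T ⟶ x i) :
    (∐ fun j => (concF x i a j).left) ⟶ T :=
  Sigma.desc (fun j =>
    show concL i T j ⟶ T from
    letI := Classical.propDecidable (i = j)
    if h : i = j then eqToHom (by rw [h, concL_self])
    else eqToHom (concL_ne T h) ≫ initial.to T)

lemma concW_ι_self {I : Type v} (x : I → V) (i : I) {T : V} (a : T ⟶ x i) :
    Sigma.ι (fun j => (concF x i a j).left) i ≫ concW x i a = eqToHom (concL_self i T) := by
  simp [concW]
  exact dif_pos rfl

lemma concW_isIso {I : Type v} (x : I → V) (i : I) {T : V} (a : T ⟶ x i) :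
    IsIso (concW x i a) := by
  refine ⟨eqToHom (concL_self i T).symm ≫ Sigma.ι (fun j => (concF x i a j).left) i, ?_, ?_⟩
  · ext j
    by_cases h : i = j
    · subst h
      erw [← Category.assoc, concW_ι_self]
      simp
      erw [eqToHom_trans_assoc, eqToHom_refl, Category.id_comp]
    · exact eq_from_bot (concL_ne T h) _ _
  · erw [Category.assoc, concW_ι_self]
    simp

lemma concW_comp {I : Type v} (x : I → V) (i : I) {T : V} (a : T ⟶ x i) :
    concW x i a ≫ (a ≫ Sigma.ι x i) = Limits.Sigma.map (fun j => (concF x i a j).hom) := by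
  ext j
  by_cases h : i = j
  · subst h
    erw [Sigma.ι_desc_assoc, Sigma.ι_map]
    simp [concF]
  · exact eq_from_bot (concL_ne T h) _ _

lemma concF_hom_self {I : Type v} (x : I → V) (i : I) {T : V} (a : T ⟶ x i) :
    (concF x i a i).hom = eqToHom (concL_self i T) ≫ a := by
  simp [concF]

end Conc

section Fwd

variable [HasInitial V]

/-- Morphisms out of a concentrated family. -/
noncomputable def concHom {I : Type v} (x : I → V) (i : I) {T : V} (a : T ⟶ x i)
    (B : ∀ j, Over (x j)) (m : T ⟶ (B i).left) (hm : m ≫ (B i).hom = a) :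
    ∀ j, concF x i a j ⟶ B j := fun j =>
  letI := Classical.propDecidable (i = j)
  if h : i = j then
    Over.homMk (eqToHom (show concL i T j = T by subst h; exact concL_self i T)
        ≫ m ≫ eqToHom (show (B i).left = (B j).left by rw [h]))
      (by subst h; rw [concF_hom_self]; simp [hm]; rfl)
  else Over.homMk (eqToHom (concL_ne T h) ≫ initial.to (B j).left)
    (eq_from_bot (concL_ne T h) _ _)

lemma concHom_left_self {I : Type v} (x : I → V) (i : I) {T : V} (a : T ⟶ x i)
    (B : ∀ j, Over (x j)) (m : T ⟶ (B i).left) (hm : m ≫ (B i).hom = a) :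
    (concHom x i a B m hm i).left = eqToHom (concL_self i T) ≫ m := by
  simp [concHom]
  rfl

variable (V)

/-- L1: with all coproduct functors equivalences, maps out of anything over `⊥` are unique. -/
lemma fwd_uniq (hEq : ∀ {I : Type v} (x : I → V), (coprodFunctor (V := V) x).IsEquivalence)
    {T : V} (t : T ⟶ ⊥_ V) {Z : V} (u v : T ⟶ Z) : u = v := by
  set x : PEmpty.{v+1} → V := fun i => i.elim with hx
  haveI := hEq x
  set F := coprodFunctor (V := V) x with hF
  set g : Over (∐ x) := Over.mk (t ≫ initial.to (∐ x)) with hg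
  set e := F.objObjPreimageIso g with he
  set w := e.hom.left with hw
  have hiso : IsIso w := by
    have : w = ((Over.forget (∐ x)).mapIso e).hom := rfl
    rw [this]; exact Iso.isIso_hom _
  have key : w ≫ u = w ≫ v := by
    apply Sigma.hom_ext; rintro ⟨⟨⟩⟩
  calc u = inv w ≫ w ≫ u := by rw [IsIso.inv_hom_id_assoc]
    _ = inv w ≫ w ≫ v := by rw [key]
    _ = v := by rw [IsIso.inv_hom_id_assoc]

/-- Forward: every `f : Y ⟶ ∐ x` admits pullbacks along coprojections,
    realized by a family whose coproduct is `Y`. -/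
lemma fwd_key (hEq : ∀ {I : Type v} (x : I → V), (coprodFunctor (V := V) x).IsEquivalence)
    {I : Type v} (x : I → V) {Y : V} (f : Y ⟶ ∐ x) :
    ∃ (y : I → V) (p : ∀ i, y i ⟶ Y) (q : ∀ i, y i ⟶ x i),
      (∀ i, IsPullback (q i) (p i) (Sigma.ι x i) f) ∧ IsIso (Sigma.desc p) := by
  haveI := hEq x
  set F := coprodFunctor (V := V) x with hF
  set B := F.objPreimage (Over.mk f) with hB
  set ε := F.objObjPreimageIso (Over.mk f) with hε
  set e : (∐ fun j => (B j).left) ⟶ Y := ε.hom.left with he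
  have hiso : IsIso e := by
    have : e = ((Over.forget (∐ x)).mapIso ε).hom := rfl
    rw [this]; exact Iso.isIso_hom _
  have hef : e ≫ f = Limits.Sigma.map (fun j => (B j).hom) := Over.w ε.hom
  set p : ∀ i, (B i).left ⟶ Y := fun i => Sigma.ι (fun j => (B j).left) i ≫ e with hp
  have hpb : ∀ i, IsPullback ((B i).hom) (p i) (Sigma.ι x i) f := by
    intro i
    have comm : (B i).hom ≫ Sigma.ι x i = p i ≫ f := by
      rw [hp, Category.assoc, hef]; simp
    have H : ∀ (T : V) (aa : T ⟶ x i) (b : T ⟶ Y), aa ≫ Sigma.ι x i = b ≫ f →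
        ∃! l : T ⟶ (B i).left, l ≫ (B i).hom = aa ∧ l ≫ p i = b := by
      intro T aa b hab
      haveI := concW_isIso x i aa
      set A := concF x i aa with hA
      set w := concW x i aa with hw
      have hhom : (w ≫ b ≫ inv e) ≫ Limits.Sigma.map (fun j => (B j).hom)
          = Limits.Sigma.map (fun j => (A j).hom) := by
        rw [← concW_comp x i aa]
        simp only [Category.assoc]
        rw [← hef, IsIso.inv_hom_id_assoc, ← hab, ← hw]
      set hom : F.obj A ⟶ F.obj B := Over.homMk (w ≫ b ≫ inv e : (∐ fun j => (A j).left) ⟶ (∐ fun j => (B j).left))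
        (by exact hhom) with hhomdef
      set η := F.preimage hom with hη
      have hFη : F.map η = hom := F.map_preimage hom
      have hFηl : Limits.Sigma.map (fun j => (η j).left) = w ≫ b ≫ inv e := by
        have := congrArg CommaMorphism.left hFη
        exact this
      have hηι : ∀ {m : T ⟶ (B i).left},
          (η i).left = eqToHom (concL_self i T) ≫ m → m ≫ p i = b := by
        intro m hm
        have h1 : Sigma.ι (fun j => (A j).left) i ≫ Limits.Sigma.map (fun j => (η j).left)
            = (η i).left ≫ Sigma.ι (fun j => (B j).left) i := by simp
        rw [hFηl] at h1
        rw [hp]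
        have h2 : Sigma.ι (fun j => (A j).left) i ≫ w ≫ b ≫ inv e
            = eqToHom (concL_self i T) ≫ b ≫ inv e := by
          rw [← Category.assoc, concW_ι_self x i aa]; rfl
        rw [h2, hm] at h1
        have h3 : m ≫ Sigma.ι (fun j => (B j).left) i = b ≫ inv e := by
          erw [Category.assoc] at h1
          exact ((cancel_epi _).1 h1).symm
        rw [← Category.assoc, h3]
        simp
      refine ⟨eqToHom (concL_self i T).symm ≫ (η i).left, ⟨?_, ?_⟩, ?_⟩
      · have := Over.w (η i)
        rw [show (A i).hom = eqToHom (concL_self i T) ≫ aa from concF_hom_self x i aa] at this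
        erw [Category.assoc, this]
        simp
      · exact hηι (by erw [eqToHom_trans_assoc, eqToHom_refl, Category.id_comp])
      · rintro m ⟨hm1, hm2⟩
        set θ := concHom x i aa B m hm1 with hθ
        have hmb : m ≫ Sigma.ι (fun j => (B j).left) i = b ≫ inv e := by
          rw [IsIso.eq_comp_inv]
          rw [hp] at hm2
          simpa using hm2
        have hFθ : F.map θ = hom := by
          ext
          have goal1 : Limits.Sigma.map (fun j => (θ j).left) = w ≫ b ≫ inv e := by
            ext j
            by_cases h : i = j
            · subst h
              have h1 : Sigma.ι (fun k => (A k).left) i ≫ Limits.Sigma.map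
                  (fun k => (θ k).left) = (θ i).left ≫ Sigma.ι (fun k => (B k).left) i := by
                simp
              rw [h1, hθ, concHom_left_self]; erw [Category.assoc, hmb, hw,
                ← Category.assoc (Sigma.ι (fun j => (concF x i aa j).left) i) (concW x i aa),
                concW_ι_self x i aa]
            · exact eq_from_bot (concL_ne T h) _ _
          exact goal1
        have hθη : θ = η := F.map_injective (by rw [hFθ, hFη])
        have : (θ i).left = (η i).left := by rw [hθη]
        rw [hθ, concHom_left_self] at this
        rw [← this]
        simp
    have comm' : (B i).hom ≫ Sigma.ι x i = p i ≫ f := comm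
    exact IsPullback.of_isLimit (PullbackCone.IsLimit.mk comm'
      (fun s => (H s.pt s.fst s.snd s.condition).exists.choose)
      (fun s => (H s.pt s.fst s.snd s.condition).exists.choose_spec.1)
      (fun s => (H s.pt s.fst s.snd s.condition).exists.choose_spec.2)
      (fun s m hm1 hm2 => ((H s.pt s.fst s.snd s.condition).unique ⟨hm1, hm2⟩
        (H s.pt s.fst s.snd s.condition).exists.choose_spec)))
  refine ⟨fun i => (B i).left, p, fun i => (B i).hom, hpb, ?_⟩
  have : Sigma.desc p = e := by
    ext i
    simp [hp]
  rw [this]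
  exact hiso

end Fwd

section Fwd2
variable [HasInitial V] (V)

lemma fwd_disjoint (hEq : ∀ {I : Type v} (x : I → V), (coprodFunctor (V := V) x).IsEquivalence) :
    DisjointCoproducts V := by
  intro I x i j hij
  haveI := hEq x
  set F := coprodFunctor (V := V) x with hF
  have comm : initial.to (x i) ≫ Sigma.ι x i = initial.to (x j) ≫ Sigma.ι x j :=
    initial.hom_ext _ _
  have key : ∀ (s : PullbackCone (Sigma.ι x i) (Sigma.ι x j)), s.pt ⟶ ⊥_ V := by
    intro s
    haveI := concW_isIso x i s.fst
    haveI := concW_isIso x j s.snd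
    have hhom : (concW x i s.fst ≫ inv (concW x j s.snd))
        ≫ Limits.Sigma.map (fun k => (concF x j s.snd k).hom)
        = Limits.Sigma.map (fun k => (concF x i s.fst k).hom) := by
      rw [← concW_comp x j s.snd, ← concW_comp x i s.fst]
      simp only [Category.assoc, IsIso.inv_hom_id_assoc]
      rw [s.condition]
    set hom : F.obj (concF x i s.fst) ⟶ F.obj (concF x j s.snd) :=
      Over.homMk (concW x i s.fst ≫ inv (concW x j s.snd) :
        (∐ fun k => (concF x i s.fst k).left) ⟶ ∐ fun k => (concF x j s.snd k).left)
        (by exact hhom) with hhomdef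
    set η := F.preimage hom with hη
    exact eqToHom (concL_self i s.pt).symm ≫ (η i).left
      ≫ eqToHom (concL_ne s.pt (fun h => hij h.symm))
  exact IsPullback.of_isLimit (PullbackCone.IsLimit.mk comm key
    (fun s => fwd_uniq V hEq (key s) _ _)
    (fun s => fwd_uniq V hEq (key s) _ _)
    (fun s m _ _ => fwd_uniq V hEq m _ _))

end Fwd2

variable (V)

/-- A category with small coproducts is extensive (every
coproduct functor `∏_i (V/x i) ⥤ V/(∐ x)` is an equivalence) if and only if it
has pullbacks along coproduct coprojections and coproducts are universal (e2)
and disjoint (e3). -/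
theorem extensive_iff_universal_and_disjoint [HasInitial V] :
    (∀ {I : Type v} (x : I → V), (coprodFunctor V x).IsEquivalence) ↔
      ((∀ ⦃I : Type v⦄ (x : I → V) (i : I) ⦃Y : V⦄ (f : Y ⟶ ∐ x),
          HasPullback (Sigma.ι x i) f) ∧
        UniversalCoproducts V ∧ DisjointCoproducts V) := by
  constructor
  · intro hEq
    refine ⟨?_, ?_, fwd_disjoint V @hEq⟩
    · intro I x i Y f
      obtain ⟨y, p, q, H, -⟩ := fwd_key V @hEq x f
      exact HasLimit.mk ⟨(H i).cone, (H i).isLimit⟩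
    · intro I x Y f y p q H
      obtain ⟨y', p', q', H', hiso⟩ := fwd_key V @hEq x f
      have hdesc : Sigma.desc p
          = Limits.Sigma.map (fun i => (IsPullback.isoIsPullback _ _ (H i) (H' i)).hom)
            ≫ Sigma.desc p' := by
        ext i
        simp only [colimit.ι_desc, Cofan.mk_ι_app]
        have h1 : Sigma.ι y i ≫ Limits.Sigma.map
            (fun k => (IsPullback.isoIsPullback _ _ (H k) (H' k)).hom) ≫ Sigma.desc p'
            = (IsPullback.isoIsPullback _ _ (H i) (H' i)).hom ≫ p' i := by
          simp
        rw [h1, IsPullback.isoIsPullback_hom_snd]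
      rw [hdesc]
      haveI : ∀ i, IsIso (IsPullback.isoIsPullback _ _ (H i) (H' i)).hom := fun i =>
        inferInstance
      infer_instance
  · rintro ⟨hp, hu, hd⟩ I x
    exact backward V hp hu hd x
end
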